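/- The quantum Kostka numbers K^β_{λ/d/μ} are invariant under any permutation of the entries of the weight vector β. -/

import Mathlib

open Finset

/-- The set `P_{kn}` of partitions fitting in a `k × (n-k)` rectangle,
represented as antitone functions `Fin k → ℕ` bounded by `n - k`. -/
def PknFinset (k n : ℕ) : Finset (Fin k → ℕ) :=
  ((Finset.univ : Finset (Fin k → Fin (n - k + 1))).image (fun f i => (f i : ℕ))).filter
    (fun lam => ∀ i j : Fin k, i ≤ j → lam j ≤ lam i)

/-- The 01-word of a partition `λ ∈ P_{kn}`: position `j` (0-based; 1-based `j+1`)
carries a `1` iff `j + 1 = λ_i + (k + 1 - i)` for some row `i`. -/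
def omegaWord (n : ℕ) {k : ℕ} (lam : Fin k → ℕ) : Fin n → Bool :=
  fun j => decide (∃ i : Fin k, lam i + (k - (i : ℕ)) = (j : ℕ) + 1)

/-- The complement partition `λ∨`, with `λ∨_i = n - k - λ_{k+1-i}`. -/
def complP (n k : ℕ) (lam : Fin k → ℕ) : Fin k → ℕ :=
  fun i => (n - k) - lam (Fin.rev i)

/-- Size of the Durfee square of `λ` (number of boxes on the main diagonal). -/
def diag0 {k : ℕ} (lam : Fin k → ℕ) : ℕ :=
  (Finset.univ.filter (fun i : Fin k => (i : ℕ) < lam i)).card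

/-- Number of boxes of `λ` on the `i`-th diagonal. -/
def diagI {k : ℕ} (lam : Fin k → ℕ) (i : ℤ) : ℕ :=
  (Finset.univ.filter (fun a : Fin k => 0 ≤ (a : ℤ) + i ∧ (a : ℤ) + 1 + i ≤ (lam a : ℤ))).card

/-- `|λ| = λ_1 + ⋯ + λ_k`. -/
def psize {k : ℕ} (lam : Fin k → ℕ) : ℕ := ∑ i, lam i

/-- The value at index `t` of the cylindric loop `λ[r]`: the `(k,n)`-periodic
weakly decreasing sequence with `λ[r]_{i+r} = λ_i + r` for `1 ≤ i ≤ k`. -/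
def loopVal (n : ℕ) {k : ℕ} (lam : Fin k → ℕ) (r t : ℤ) : ℤ :=
  if h : 0 < k then
    (lam ⟨((t - r - 1) % (k : ℤ)).toNat, by
      have hk0 : ((k : ℤ)) ≠ 0 := by exact_mod_cast h.ne'
      have h1 : 0 ≤ (t - r - 1) % (k : ℤ) := Int.emod_nonneg _ hk0
      have h2 : (t - r - 1) % (k : ℤ) < (k : ℤ) := Int.emod_lt_of_pos _ (by exact_mod_cast h)
      omega⟩ : ℤ) + r - ((t - r - 1) / (k : ℤ)) * ((n : ℤ) - (k : ℤ))
  else 0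

/-- The cylindric diagram of shape `λ[r]/μ[s]`, as a `Shift`-invariant subset of `ℤ²`
(whose quotient modulo `(-k, n-k)ℤ` is the diagram in the cylinder). -/
def cylDiagram (n : ℕ) {k : ℕ} (lam mu : Fin k → ℕ) (r s : ℤ) : Set (ℤ × ℤ) :=
  {p | loopVal n mu s p.1 < p.2 ∧ p.2 ≤ loopVal n lam r p.1}

/-- The cylindric shape `λ[r]/μ[s]` is toric: the projection of its diagram from the
cylinder `ℤ²/(-k, n-k)ℤ` to the torus `(ℤ/k) × (ℤ/(n-k))` is injective. -/
def IsToricShape (n : ℕ) {k : ℕ} (lam mu : Fin k → ℕ) (r s : ℤ) : Prop :=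
  ∀ p q : ℤ × ℤ, p ∈ cylDiagram n lam mu r s → q ∈ cylDiagram n lam mu r s →
    (k : ℤ) ∣ (q.1 - p.1) → ((n : ℤ) - k) ∣ (q.2 - p.2) →
    ∃ m : ℤ, q.1 = p.1 - m * k ∧ q.2 = p.2 + m * ((n : ℤ) - k)

/-- A semi-standard cylindric tableau of shape `λ/d/μ = λ[d]/μ[0]`, encoded as a
`Shift`-periodic function on `ℤ²` that is positive exactly on the diagram, weakly
increasing along rows and strictly increasing along columns. -/
def IsCylTableau (n : ℕ) {k : ℕ} (lam mu : Fin k → ℕ) (d : ℕ) (T : ℤ × ℤ → ℕ) : Prop :=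
  (∀ p : ℤ × ℤ, p ∈ cylDiagram n lam mu (d : ℤ) 0 ↔ 0 < T p) ∧
  (∀ p : ℤ × ℤ, T (p.1 - (k : ℤ), p.2 + ((n : ℤ) - k)) = T p) ∧
  (∀ p : ℤ × ℤ, p ∈ cylDiagram n lam mu (d : ℤ) 0 →
      (p.1, p.2 + 1) ∈ cylDiagram n lam mu (d : ℤ) 0 → T p ≤ T (p.1, p.2 + 1)) ∧
  (∀ p : ℤ × ℤ, p ∈ cylDiagram n lam mu (d : ℤ) 0 →
      (p.1 + 1, p.2) ∈ cylDiagram n lam mu (d : ℤ) 0 → T p < T (p.1 + 1, p.2))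

/-- The number of entries of the cylindric tableau `T` equal to `c`, counted once per
`Shift`-orbit (rows `1,…,k` form a fundamental domain). -/
noncomputable def cylWeight (k : ℕ) (T : ℤ × ℤ → ℕ) (c : ℕ) : ℕ :=
  {p : ℤ × ℤ | 1 ≤ p.1 ∧ p.1 ≤ (k : ℤ) ∧ T p = c}.ncard

/-- Number of semi-standard cylindric tableaux of shape `λ/d/μ` with weight `β`
(entries taken among `1, …, l`). -/
noncomputable def tabCount (n : ℕ) {k : ℕ} (lam mu : Fin k → ℕ) (d : ℕ) {l : ℕ} (beta : Fin l → ℕ) : ℕ :=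
  {T : ℤ × ℤ → ℕ | IsCylTableau n lam mu d T ∧
    (∀ i : Fin l, cylWeight k T ((i : ℕ) + 1) = beta i) ∧
    (∀ c : ℕ, l < c → cylWeight k T c = 0)}.ncard

/-- The elementary symmetric generator `e_t` of `ℤ[q, e_1, …, e_k]` (zero out of range,
`1` for `t = 0`).  The variable `none` is the quantum parameter `q`. -/
noncomputable def epolyZ (k : ℕ) (t : ℤ) : MvPolynomial (Option (Fin k)) ℤ :=
  if t = 0 then 1
  else if h : 0 < t ∧ t ≤ (k : ℤ) then MvPolynomial.X (some ⟨(t - 1).toNat, by omega⟩) else 0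

/-- The complete homogeneous symmetric function `h_m`, expressed in the `e_i`
via the dual Jacobi–Trudi determinant. -/
noncomputable def hpolyD (k m : ℕ) : MvPolynomial (Option (Fin k)) ℤ :=
  Matrix.det (Matrix.of (fun i j : Fin m => epolyZ k (1 + (j : ℤ) - (i : ℤ))))

/-- `h_t` with the convention `h_t = 0` for `t < 0`. -/
noncomputable def hpolyDZ (k : ℕ) (t : ℤ) : MvPolynomial (Option (Fin k)) ℤ :=
  if 0 ≤ t then hpolyD k t.toNat else 0

/-- The ideal `I_q = ⟨h_{n-k+1}, …, h_{n-1}, h_n + (-1)^k q⟩` of `ℤ[q, e_1, …, e_k]`. -/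
noncomputable def qIdeal (k n : ℕ) : Ideal (MvPolynomial (Option (Fin k)) ℤ) :=
  Ideal.span ((hpolyD k '' (Set.Ioo (n - k) n)) ∪
    {hpolyD k n + ((-1) ^ k : ℤ) • MvPolynomial.X none})

/-- The quantum cohomology ring `QH*(Gr_{k,n}) = ℤ[q, e_1, …, e_k]/I_q`. -/
abbrev QHRing (k n : ℕ) := MvPolynomial (Option (Fin k)) ℤ ⧸ qIdeal k n

/-- The class of the quantum parameter `q` in `QH*(Gr_{k,n})`. -/
noncomputable def qClass (k n : ℕ) : QHRing k n := Ideal.Quotient.mk _ (MvPolynomial.X none)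

/-- The Schubert class `σ_λ ∈ QH*(Gr_{k,n})`, defined by the (quantum) Giambelli
formula `σ_λ = det(h_{λ_i + j - i})`. -/
noncomputable def sigmaClass (k n : ℕ) (lam : Fin k → ℕ) : QHRing k n :=
  Ideal.Quotient.mk _
    (Matrix.det (Matrix.of (fun i j : Fin k => hpolyDZ k ((lam i : ℤ) + (j : ℤ) - (i : ℤ)))))

/-- The special class `h_j = σ_{(j)}`. -/
noncomputable def hClass (k n : ℕ) (j : ℕ) : QHRing k n := Ideal.Quotient.mk _ (hpolyD k j)

/-- The special class `e_j = σ_{(1^j)}`. -/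
noncomputable def eClass (k n : ℕ) (j : ℕ) : QHRing k n := Ideal.Quotient.mk _ (epolyZ k (j : ℤ))

/-- The statement that `gw` is the family of structure constants (Gromov–Witten
invariants) of `QH*(Gr_{k,n})`:
`σ_μ * σ_ν = ∑_{d,λ} q^d C_{μν}^{λ,d} σ_λ` (all structure constants vanish
beyond degree `2k(n-k)`, which bounds the possible degrees). -/
def IsGWFamily (k n : ℕ)
    (gw : (Fin k → ℕ) → (Fin k → ℕ) → (Fin k → ℕ) → ℕ → ℤ) : Prop :=
  ∀ mu nu : Fin k → ℕ, mu ∈ PknFinset k n → nu ∈ PknFinset k n →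
    (sigmaClass k n mu * sigmaClass k n nu =
      ∑ e ∈ Finset.range (2 * k * (n - k) + 1), ∑ lm ∈ PknFinset k n,
        gw mu nu lm e • (qClass k n ^ e * sigmaClass k n lm)) ∧
    (∀ e lm, 2 * k * (n - k) < e → gw mu nu lm e = 0)

/-- Recover a partition in `P_{kn}` from a 01-word with `k` ones. -/
def partOfWord (k n : ℕ) (w : Fin n → Bool) : Fin k → ℕ :=
  fun i =>
    if h : (Finset.univ.filter (fun j : Fin n => w j = true)).card = k then
      ((Finset.orderIsoOfFin _ h (Fin.rev i) : Fin n) : ℕ) + 1 - (k - (i : ℕ))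
    else 0

/-- Cyclic rotation of a 01-word: `(rotWord a w)_j = w_{j+a mod n}`. -/
def rotWord (n : ℕ) (a : ℤ) (w : Fin n → Bool) : Fin n → Bool :=
  fun j =>
    if h : 0 < n then
      w ⟨(((j : ℤ) + a) % (n : ℤ)).toNat, by
        have hn0 : ((n : ℤ)) ≠ 0 := by exact_mod_cast h.ne'
        have h1 : 0 ≤ ((j : ℤ) + a) % (n : ℤ) := Int.emod_nonneg _ hn0
        have h2 : ((j : ℤ) + a) % (n : ℤ) < (n : ℤ) := Int.emod_lt_of_pos _ (by exact_mod_cast h)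
        omega⟩
    else false
  
/-- The `a`-th power of the cyclic shift `S` on `P_{kn}`:
`S^a(λ)` is the partition whose 01-word is `ω(λ)` rotated by `a`. -/
def Srot (k n : ℕ) (a : ℤ) (lam : Fin k → ℕ) : Fin k → ℕ :=
  partOfWord k n (rotWord n a (omegaWord n lam))

/-- `φ_i(λ)`: for `1 ≤ i ≤ n` the partial sum `ω_1 + ⋯ + ω_i` of the 01-word of `λ`,
extended to all `i ∈ ℤ` by `φ_{i+n} = φ_i + k`. -/
def phi (n : ℕ) {k : ℕ} (lam : Fin k → ℕ) (i : ℤ) : ℤ :=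
  ((Finset.univ.filter
      (fun j : Fin n => ((j : ℕ) : ℤ) < i % (n : ℤ) ∧ omegaWord n lam j = true)).card : ℤ)
    + (k : ℤ) * (i / (n : ℤ))

/-- `C_{λμν}(q) = ∑_e CCoef(λ,μ,ν,e) q^e`: the coefficient of `q^e` in the
Gromov–Witten generating function `q^d C^d_{λμν}` (zero unless `e` equals the
degree `d = (|λ|+|μ|+|ν|-k(n-k))/n`), where `C^d_{λμν} = C_{λμ}^{ν∨,d}`. -/
def CCoef (k n : ℕ) (gw : (Fin k → ℕ) → (Fin k → ℕ) → (Fin k → ℕ) → ℕ → ℤ)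
    (lam mu nu : Fin k → ℕ) (e : ℕ) : ℤ :=
  if ((psize lam : ℤ) + psize mu + psize nu) = (k : ℤ) * ((n : ℤ) - k) + (e : ℤ) * n then
    gw lam mu (complP n k nu) e
  else 0

/-! Permutations of `Fin l` are generated by adjacent transpositions, so it suffices to exchange
two consecutive weights `β_v` and `β_{v+1}`. The Bender–Knuth involution does so on cylindric
tableaux. Since the boundary loops of `λ/d/μ` weakly decrease, it preserves semistandardness,
and it commutes with the periodicity shift. It only rewrites free entries, exchanging their
numbers of `v`s and `v + 1`s in each row, and within a period the locked `v`s and the locked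
`v + 1`s are equinumerous; hence it exchanges the numbers of entries `v` and `v + 1`. -/

section Rank

variable {α : Type*} [LinearOrder α] {S A : Set α}

noncomputable def rankIn (S : Set α) (x : α) : ℕ := {y ∈ S | y ≤ x}.ncard

lemma rankIn_mono (hS : S.Finite) {x y : α} (hxy : x ≤ y) : rankIn S x ≤ rankIn S y :=
  Set.ncard_le_ncard (fun _ hz => ⟨hz.1, hz.2.trans hxy⟩) (hS.subset fun _ hz => hz.1)

lemma Finset.card_filter_rank_le (S : Finset α) (m : ℕ) :
    #{x ∈ S | #{y ∈ S | y ≤ x} ≤ m} = min m #S := by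
  induction S using Finset.induction_on_max with
  | empty => simp
  | insert a s ha ih =>
    have has : a ∉ s := fun h => lt_irrefl a (ha a h)
    have hrank : ∀ x ∈ s, #{y ∈ insert a s | y ≤ x} = #{y ∈ s | y ≤ x} := fun x hx => by
      rw [filter_insert, if_neg (not_le.2 (ha x hx))]
    have hrank_a : #{y ∈ insert a s | y ≤ a} = #s + 1 := by
      rw [filter_insert, if_pos le_rfl, filter_true_of_mem fun x hx => (ha x hx).le,
        card_insert_of_notMem has]
    rw [filter_insert, hrank_a, filter_congr fun x hx => by rw [hrank x hx],
      card_insert_of_notMem has]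
    split_ifs with h
    · rw [card_insert_of_notMem fun h' => has (mem_filter.1 h').1, ih]
      omega
    · rw [ih]
      omega

lemma ncard_setOf_rankIn_le (hS : S.Finite) (m : ℕ) :
    {x ∈ S | rankIn S x ≤ m}.ncard = min m S.ncard := by
  classical
  have hrank : ∀ x, rankIn S x = #{y ∈ hS.toFinset | y ≤ x} := fun x => by
    rw [rankIn, ← Set.ncard_coe_finset, coe_filter]
    simp
  rw [Set.ncard_eq_toFinset_card S hS, ← Finset.card_filter_rank_le, ← Set.ncard_coe_finset,
    coe_filter]
  simp only [Set.Finite.mem_toFinset, hrank]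

lemma ncard_setOf_not_rankIn_le (hS : S.Finite) (m : ℕ) :
    {x ∈ S | ¬ rankIn S x ≤ m}.ncard = S.ncard - min m S.ncard := by
  have hcompl : {x ∈ S | ¬ rankIn S x ≤ m} = S \ {x ∈ S | rankIn S x ≤ m} := by
    ext x
    simp only [Set.mem_ofPred_eq, Set.mem_sdiff]
    tauto
  rw [hcompl, Set.ncard_sdiff (fun _ hx => hx.1) (hS.subset fun _ hx => hx.1),
    ncard_setOf_rankIn_le hS m]

lemma rankIn_le_ncard_iff (hS : S.Finite) (hAS : A ⊆ S)
    (hA : ∀ a ∈ A, ∀ x ∈ S, x ∉ A → a < x) {x : α} (hx : x ∈ S) :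
    rankIn S x ≤ A.ncard ↔ x ∈ A := by
  constructor
  · intro hle
    by_contra hxA
    have hsub : insert x A ⊆ {y ∈ S | y ≤ x} := by
      rintro y (rfl | hy)
      · exact ⟨hx, le_rfl⟩
      · exact ⟨hAS hy, (hA y hy x hx hxA).le⟩
    have := Set.ncard_le_ncard hsub (hS.subset fun _ hz => hz.1)
    rw [Set.ncard_insert_of_notMem hxA (hS.subset hAS)] at this
    exact absurd (this.trans hle) (by omega)
  · intro hxA
    refine Set.ncard_le_ncard (fun y hy => ?_) (hS.subset hAS)
    by_contra hyA
    exact absurd hy.2 (not_le.2 (hA x hxA y hy.1 hyA))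

end Rank

lemma ncard_preimage_add_right (S : Set ℤ) (b : ℤ) : ((· + b) ⁻¹' S).ncard = S.ncard :=
  Set.ncard_preimage_of_injective_subset_range (add_left_injective b)
    fun z _ => ⟨z - b, sub_add_cancel z b⟩

lemma rankIn_preimage_add_right (S : Set ℤ) (b x : ℤ) :
    rankIn ((· + b) ⁻¹' S) x = rankIn S (x + b) := by
  have hset : {y ∈ (· + b) ⁻¹' S | y ≤ x} = (· + b) ⁻¹' {z ∈ S | z ≤ x + b} := by
    ext y
    simp
  rw [rankIn, rankIn, hset, ncard_preimage_add_right]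

lemma ncard_setOf_fst_mem {ι β : Type*} (s : Finset ι) {g : ι → Set β}
    (hg : ∀ i ∈ s, (g i).Finite) :
    {p : ι × β | p.1 ∈ s ∧ p.2 ∈ g p.1}.ncard = ∑ i ∈ s, (g i).ncard := by
  have hunion : {p : ι × β | p.1 ∈ s ∧ p.2 ∈ g p.1} = ⋃ i ∈ (s : Set ι), Prod.mk i '' g i := by
    ext ⟨i, b⟩
    simp [and_comm]
  rw [hunion, s.finite_toSet.ncard_biUnion (fun i hi => (hg i hi).image _), finsum_mem_coe_finset]
  · exact sum_congr rfl fun i _ => Set.ncard_image_of_injective _ (Prod.mk_right_injective i)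
  · intro i _ j _ hij
    simp only [Function.onFun, Set.disjoint_left, Set.mem_image]
    rintro _ ⟨b, _, rfl⟩ ⟨b', _, h⟩
    exact hij (congrArg Prod.fst h).symm

lemma sum_Icc_sub_one_of_periodic {M : Type*} [AddCancelCommMonoid M] {f : ℤ → M} {k : ℕ}
    (hf : Function.Periodic f k) :
    ∑ r ∈ Icc (1 : ℤ) k, f (r - 1) = ∑ r ∈ Icc (1 : ℤ) k, f r := by
  have hshift : ∑ r ∈ Icc (1 : ℤ) k, f (r - 1) = ∑ r ∈ Ico (0 : ℤ) k, f r :=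
    sum_nbij' (· - 1) (· + 1) (by simp) (by simp) (by simp) (by simp) (fun _ _ => rfl)
  have hsplit := sum_Ico_add_eq_sum_Ico_add_one (show (0 : ℤ) ≤ k by positivity) f
  rw [← insert_Ico_add_one_left_eq_Ico (show (0 : ℤ) < k + 1 by positivity),
    sum_insert (by simp), zero_add, Ico_add_one_right_eq_Icc, ← hf 0, zero_add,
    add_comm] at hsplit
  rw [hshift, add_left_cancel hsplit]

section Diagram

variable {k n : ℕ} {lam mu : Fin k → ℕ}

lemma le_of_mem_PknFinset (hlam : lam ∈ PknFinset k n) (i : Fin k) : lam i ≤ n - k := by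
  obtain ⟨f, -, rfl⟩ := mem_image.1 (mem_filter.1 hlam).1
  exact Nat.lt_succ_iff.1 (f i).isLt

lemma antitone_of_mem_PknFinset (hlam : lam ∈ PknFinset k n) : Antitone lam :=
  (mem_filter.1 hlam).2

lemma loopVal_eq (hk : 0 < k) (r t q : ℤ) {m : ℕ} (hm : m < k)
    (ht : t - r - 1 = k * q + m) :
    loopVal n lam r t = lam ⟨m, hm⟩ + r - q * ((n : ℤ) - k) := by
  have hdiv := (Int.ediv_emod_unique (a := t - r - 1) (b := k) (r := m) (q := q)
    (by exact_mod_cast hk)).2 ⟨by linarith, by positivity, by exact_mod_cast hm⟩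
  rw [loopVal, dif_pos hk]
  simp only [hdiv.1, hdiv.2, Int.toNat_natCast]

lemma loopVal_succ_le (hkn : k ≤ n) (hlam : lam ∈ PknFinset k n) (r t : ℤ) :
    loopVal n lam r (t + 1) ≤ loopVal n lam r t := by
  rcases Nat.eq_zero_or_pos k with rfl | hk
  · simp [loopVal]
  obtain ⟨q, m, hm, ht⟩ : ∃ q : ℤ, ∃ m : ℕ, m < k ∧ t - r - 1 = k * q + m :=
    have h0 := Int.emod_nonneg (t - r - 1) (b := k) (by omega)
    have h1 := Int.emod_lt_of_pos (t - r - 1) (b := k) (by omega)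
    have h2 := Int.emod_add_mul_ediv (t - r - 1) k
    ⟨(t - r - 1) / k, ((t - r - 1) % k).toNat, by omega, by omega⟩
  rw [loopVal_eq hk r t q hm ht]
  rcases Nat.lt_or_ge (m + 1) k with hm1 | hm1
  · rw [loopVal_eq hk r (t + 1) q hm1 (by push_cast; linarith)]
    have := antitone_of_mem_PknFinset hlam (show (⟨m, hm⟩ : Fin k) ≤ ⟨m + 1, hm1⟩ by simp)
    omega
  · -- `t + 1` starts the next period of the loop
    rw [loopVal_eq hk r (t + 1) (q + 1) hk (by push_cast; linarith [show m + 1 = k by omega])]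
    have h0 := le_of_mem_PknFinset hlam ⟨0, hk⟩
    have h1 : (q + 1) * ((n : ℤ) - k) = q * ((n : ℤ) - k) + ((n : ℤ) - k) := by ring
    omega

lemma mem_cylDiagram_of_mem_of_mem_succ (hkn : k ≤ n) (hlam : lam ∈ PknFinset k n)
    (hmu : mu ∈ PknFinset k n) {r s t a b : ℤ} (ha : (t, a) ∈ cylDiagram n lam mu r s)
    (hb : (t + 1, b) ∈ cylDiagram n lam mu r s) (hab : a ≤ b) :
    (t, b) ∈ cylDiagram n lam mu r s ∧ (t + 1, a) ∈ cylDiagram n lam mu r s := by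
  have hl := loopVal_succ_le hkn hlam r t
  have hm := loopVal_succ_le hkn hmu s t
  simp only [cylDiagram, Set.mem_ofPred_eq] at ha hb ⊢
  omega

lemma mem_cylDiagram_of_mem_of_mem {r s t a b c : ℤ} (ha : (t, a) ∈ cylDiagram n lam mu r s)
    (hb : (t, b) ∈ cylDiagram n lam mu r s) (hac : a ≤ c) (hcb : c ≤ b) :
    (t, c) ∈ cylDiagram n lam mu r s := by
  simp only [cylDiagram, Set.mem_ofPred_eq] at ha hb ⊢
  omega

end Diagram

namespace IsCylTableau

variable {k n : ℕ} {lam mu : Fin k → ℕ} {d : ℕ} {T : ℤ × ℤ → ℕ}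

lemma mem_of_pos (hT : IsCylTableau n lam mu d T) {p : ℤ × ℤ} (hp : 0 < T p) :
    p ∈ cylDiagram n lam mu d 0 :=
  (hT.1 p).2 hp

lemma translate_eq (hT : IsCylTableau n lam mu d T) :
    (fun p => T (p + (-(k : ℤ), (n : ℤ) - k))) = T := by
  funext p
  rw [← hT.2.1 p]
  rfl

lemma row_mono (hT : IsCylTableau n lam mu d T) {r a b : ℤ}
    (ha : (r, a) ∈ cylDiagram n lam mu d 0) (hb : (r, b) ∈ cylDiagram n lam mu d 0)
    (hab : a ≤ b) : T (r, a) ≤ T (r, b) := by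
  induction b, hab using Int.leInduction with
  | base => exact le_rfl
  | succ c hac ih =>
    have hc := mem_cylDiagram_of_mem_of_mem ha hb hac (by omega)
    exact (ih hc).trans (hT.2.2.1 (r, c) hc hb)

lemma col_strict (hT : IsCylTableau n lam mu d T) {r c : ℤ} (h0 : 0 < T (r, c))
    (h1 : 0 < T (r + 1, c)) : T (r, c) < T (r + 1, c) :=
  hT.2.2.2 (r, c) (hT.mem_of_pos h0) (hT.mem_of_pos h1)

lemma finite_setOf_apply_eq (hT : IsCylTableau n lam mu d T) {v : ℕ} (hv : 0 < v) (r : ℤ) :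
    {c | T (r, c) = v}.Finite := by
  refine (Set.finite_Ioc (loopVal n mu 0 r) (loopVal n lam d r)).subset fun c hc => ?_
  exact hT.mem_of_pos (p := (r, c)) (by rw [hc]; exact hv)

lemma cylWeight_eq_sum (hT : IsCylTableau n lam mu d T) {v : ℕ} (hv : 0 < v) :
    cylWeight k T v = ∑ r ∈ Icc (1 : ℤ) k, {c | T (r, c) = v}.ncard := by
  rw [cylWeight, ← ncard_setOf_fst_mem _ fun r _ => hT.finite_setOf_apply_eq hv r]
  congr 1
  ext p
  simp [and_assoc]

end IsCylTableau

section BenderKnuth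

/-! In row `r`, an entry `v` with `v + 1` directly below it, or an entry `v + 1` with `v`
directly above it, is locked; the other entries `v` and `v + 1` of the row are free. The
Bender–Knuth move rewrites the free entries of each row, `a` copies of `v` followed by `b`
copies of `v + 1`, as `b` copies of `v` followed by `a` copies of `v + 1`: a free cell becomes
`v` iff its rank among the free cells of its row is at most `b`. -/

def lowFreeRow (T : ℤ × ℤ → ℕ) (v : ℕ) (r : ℤ) : Set ℤ :=
  {c | T (r, c) = v ∧ T (r + 1, c) ≠ v + 1}

def highFreeRow (T : ℤ × ℤ → ℕ) (v : ℕ) (r : ℤ) : Set ℤ :=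
  {c | T (r, c) = v + 1 ∧ T (r - 1, c) ≠ v}

def freeRow (T : ℤ × ℤ → ℕ) (v : ℕ) (r : ℤ) : Set ℤ :=
  lowFreeRow T v r ∪ highFreeRow T v r

def lockedRow (T : ℤ × ℤ → ℕ) (v : ℕ) (r : ℤ) : Set ℤ :=
  {c | T (r, c) = v ∧ T (r + 1, c) = v + 1}

open scoped Classical in
noncomputable def benderKnuth (T : ℤ × ℤ → ℕ) (v : ℕ) (p : ℤ × ℤ) : ℕ :=
  if p.2 ∈ freeRow T v p.1 then
    if rankIn (freeRow T v p.1) p.2 ≤ (highFreeRow T v p.1).ncard then v else v + 1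
  else T p

variable {T : ℤ × ℤ → ℕ} {v : ℕ} {r c : ℤ}

lemma mem_freeRow_iff : c ∈ freeRow T v r ↔
    (T (r, c) = v ∧ T (r + 1, c) ≠ v + 1) ∨ (T (r, c) = v + 1 ∧ T (r - 1, c) ≠ v) :=
  Iff.rfl

lemma benderKnuth_of_notMem (h : c ∉ freeRow T v r) : benderKnuth T v (r, c) = T (r, c) :=
  if_neg h

lemma benderKnuth_of_mem (h : c ∈ freeRow T v r) :
    benderKnuth T v (r, c) =
      if rankIn (freeRow T v r) c ≤ (highFreeRow T v r).ncard then v else v + 1 :=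
  if_pos h

lemma apply_eq_of_mem_freeRow (h : c ∈ freeRow T v r) : T (r, c) = v ∨ T (r, c) = v + 1 :=
  h.imp (·.1) (·.1)

lemma lowFreeRow_eq (T : ℤ × ℤ → ℕ) (v : ℕ) (r : ℤ) :
    lowFreeRow T v r = {c ∈ freeRow T v r | T (r, c) = v} := by
  ext c
  simp only [freeRow, lowFreeRow, highFreeRow, Set.mem_union, Set.mem_ofPred_eq]
  omega

lemma highFreeRow_eq (T : ℤ × ℤ → ℕ) (v : ℕ) (r : ℤ) :
    highFreeRow T v r = {c ∈ freeRow T v r | T (r, c) = v + 1} := by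
  ext c
  simp only [freeRow, lowFreeRow, highFreeRow, Set.mem_union, Set.mem_ofPred_eq]
  omega

lemma notMem_freeRow_of_mem_lockedRow (h : c ∈ lockedRow T v r) :
    c ∉ freeRow T v r ∧ c ∉ freeRow T v (r + 1) := by
  obtain ⟨h1, h2⟩ := h
  simp only [freeRow, lowFreeRow, highFreeRow, Set.mem_union, Set.mem_ofPred_eq,
    add_sub_cancel_right]
  omega

lemma ncard_setOf_apply_eq (T : ℤ × ℤ → ℕ) (v : ℕ) (r : ℤ)
    (hfin : {c | T (r, c) = v}.Finite) :
    {c | T (r, c) = v}.ncard = (lockedRow T v r).ncard + (lowFreeRow T v r).ncard := by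
  have hunion : {c | T (r, c) = v} = lockedRow T v r ∪ lowFreeRow T v r := by
    ext c
    simp only [lockedRow, lowFreeRow, Set.mem_union, Set.mem_ofPred_eq]
    tauto
  rw [hunion] at hfin ⊢
  refine Set.ncard_union_eq ?_ (hfin.subset Set.subset_union_left)
    (hfin.subset Set.subset_union_right)
  exact Set.disjoint_left.2 fun c h1 h2 => h2.2 h1.2

lemma ncard_setOf_apply_eq_succ (T : ℤ × ℤ → ℕ) (v : ℕ) (r : ℤ)
    (hfin : {c | T (r, c) = v + 1}.Finite) :
    {c | T (r, c) = v + 1}.ncard = (lockedRow T v (r - 1)).ncard + (highFreeRow T v r).ncard := by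
  have hunion : {c | T (r, c) = v + 1} = lockedRow T v (r - 1) ∪ highFreeRow T v r := by
    ext c
    simp only [lockedRow, highFreeRow, Set.mem_union, Set.mem_ofPred_eq, sub_add_cancel]
    tauto
  rw [hunion] at hfin ⊢
  refine Set.ncard_union_eq ?_ (hfin.subset Set.subset_union_left)
    (hfin.subset Set.subset_union_right)
  exact Set.disjoint_left.2 fun c h1 h2 => h2.2 h1.1

lemma cylWeight_benderKnuth_of_ne (k : ℕ) (T : ℤ × ℤ → ℕ) {v w : ℕ} (hw : w ≠ v)
    (hw' : w ≠ v + 1) :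
    cylWeight k (benderKnuth T v) w = cylWeight k T w := by
  unfold cylWeight
  congr 1
  ext ⟨r, c⟩
  refine and_congr_right fun _ => and_congr_right fun _ => ?_
  by_cases h : c ∈ freeRow T v r
  · have := apply_eq_of_mem_freeRow h
    rw [benderKnuth_of_mem h]
    split_ifs <;> omega
  · rw [benderKnuth_of_notMem h]

section Translate

variable (T v r) (q : ℤ × ℤ)

lemma lowFreeRow_translate :
    lowFreeRow (fun p => T (p + q)) v r = (· + q.2) ⁻¹' lowFreeRow T v (r + q.1) := by
  obtain ⟨q₁, q₂⟩ := q
  ext c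
  simp [lowFreeRow, add_right_comm]

lemma highFreeRow_translate :
    highFreeRow (fun p => T (p + q)) v r = (· + q.2) ⁻¹' highFreeRow T v (r + q.1) := by
  obtain ⟨q₁, q₂⟩ := q
  ext c
  simp [highFreeRow, sub_add_eq_add_sub]

lemma freeRow_translate :
    freeRow (fun p => T (p + q)) v r = (· + q.2) ⁻¹' freeRow T v (r + q.1) := by
  rw [freeRow, freeRow, lowFreeRow_translate, highFreeRow_translate, Set.preimage_union]

lemma lockedRow_translate :
    lockedRow (fun p => T (p + q)) v r = (· + q.2) ⁻¹' lockedRow T v (r + q.1) := by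
  obtain ⟨q₁, q₂⟩ := q
  ext c
  simp [lockedRow, add_right_comm]

lemma benderKnuth_translate (p : ℤ × ℤ) :
    benderKnuth (fun p => T (p + q)) v p = benderKnuth T v (p + q) := by
  classical
  simp only [benderKnuth, freeRow_translate, highFreeRow_translate, rankIn_preimage_add_right,
    ncard_preimage_add_right, Set.mem_preimage, Prod.fst_add, Prod.snd_add]

end Translate

end BenderKnuth

namespace IsCylTableau

variable {k n : ℕ} {lam mu : Fin k → ℕ} {d : ℕ} {T : ℤ × ℤ → ℕ} {v : ℕ} {r c : ℤ}

lemma ne_of_mem_freeRow (hT : IsCylTableau n lam mu d T) (hv : 0 < v)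
    (h : c ∈ freeRow T v r) : T (r + 1, c) ≠ v + 1 ∧ T (r - 1, c) ≠ v := by
  have hbelow := hT.col_strict (r := r) (c := c)
  have habove := hT.col_strict (r := r - 1) (c := c)
  rw [sub_add_cancel] at habove
  rcases h with ⟨h1, h2⟩ | ⟨h1, h2⟩ <;> omega

lemma notMem_freeRow_add_one (hT : IsCylTableau n lam mu d T) (hv : 0 < v)
    (h : c ∈ freeRow T v r) : c ∉ freeRow T v (r + 1) := fun h' => by
  have hne := hT.ne_of_mem_freeRow hv h
  have hcol := hT.col_strict (r := r) (c := c)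
  rcases apply_eq_of_mem_freeRow h with h1 | h1 <;>
    rcases apply_eq_of_mem_freeRow h' with h2 | h2 <;> omega

lemma finite_freeRow (hT : IsCylTableau n lam mu d T) (hv : 0 < v) (r : ℤ) :
    (freeRow T v r).Finite :=
  ((hT.finite_setOf_apply_eq hv r).union (hT.finite_setOf_apply_eq v.succ_pos r)).subset
    fun _ h => apply_eq_of_mem_freeRow h

lemma lt_of_mem_lowFreeRow_of_mem_highFreeRow (hT : IsCylTableau n lam mu d T) (hv : 0 < v)
    {a b : ℤ} (ha : a ∈ lowFreeRow T v r) (hb : b ∈ highFreeRow T v r) : a < b := by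
  by_contra! hba
  have := hT.row_mono (hT.mem_of_pos (by rw [hb.1]; omega)) (hT.mem_of_pos (by rw [ha.1]; omega))
    hba
  rw [ha.1, hb.1] at this
  omega

lemma ncard_freeRow (hT : IsCylTableau n lam mu d T) (hv : 0 < v) (r : ℤ) :
    (freeRow T v r).ncard = (lowFreeRow T v r).ncard + (highFreeRow T v r).ncard :=
  Set.ncard_union_eq
    (Set.disjoint_left.2 fun _ ha hb =>
      (hT.lt_of_mem_lowFreeRow_of_mem_highFreeRow hv ha hb).ne rfl)
    ((hT.finite_freeRow hv r).subset Set.subset_union_left)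
    ((hT.finite_freeRow hv r).subset Set.subset_union_right)

lemma freeRow_benderKnuth (hT : IsCylTableau n lam mu d T) (hv : 0 < v) (r : ℤ) :
    freeRow (benderKnuth T v) v r = freeRow T v r := by
  ext c
  constructor
  · intro h
    by_contra hc
    rw [mem_freeRow_iff, benderKnuth_of_notMem hc] at h
    rcases h with ⟨h1, h2⟩ | ⟨h1, h2⟩
    · have h3 : T (r + 1, c) = v + 1 := by
        by_contra h3
        exact hc (Or.inl ⟨h1, h3⟩)
      exact h2 (by rw [benderKnuth_of_notMem (notMem_freeRow_of_mem_lockedRow ⟨h1, h3⟩).2, h3])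
    · have h3 : T (r - 1, c) = v := by
        by_contra h3
        exact hc (Or.inr ⟨h1, h3⟩)
      have hlocked : c ∈ lockedRow T v (r - 1) := ⟨h3, by rwa [sub_add_cancel]⟩
      exact h2 (by rw [benderKnuth_of_notMem (notMem_freeRow_of_mem_lockedRow hlocked).1, h3])
  · intro h
    have hbelow := hT.notMem_freeRow_add_one hv h
    have habove : c ∉ freeRow T v (r - 1) := fun h' =>
      hT.notMem_freeRow_add_one hv h' (by rwa [sub_add_cancel])
    have hne := hT.ne_of_mem_freeRow hv h
    rw [mem_freeRow_iff, benderKnuth_of_notMem hbelow, benderKnuth_of_notMem habove,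
      benderKnuth_of_mem h]
    split_ifs <;> omega

lemma lowFreeRow_benderKnuth (hT : IsCylTableau n lam mu d T) (hv : 0 < v) (r : ℤ) :
    lowFreeRow (benderKnuth T v) v r =
      {c ∈ freeRow T v r | rankIn (freeRow T v r) c ≤ (highFreeRow T v r).ncard} := by
  rw [lowFreeRow_eq, hT.freeRow_benderKnuth hv]
  ext c
  refine and_congr_right fun h => ?_
  rw [benderKnuth_of_mem h]
  split_ifs <;> simp_all

lemma highFreeRow_benderKnuth (hT : IsCylTableau n lam mu d T) (hv : 0 < v) (r : ℤ) :
    highFreeRow (benderKnuth T v) v r =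
      {c ∈ freeRow T v r | ¬ rankIn (freeRow T v r) c ≤ (highFreeRow T v r).ncard} := by
  rw [highFreeRow_eq, hT.freeRow_benderKnuth hv]
  ext c
  refine and_congr_right fun h => ?_
  rw [benderKnuth_of_mem h]
  split_ifs <;> simp_all

lemma ncard_lowFreeRow_benderKnuth (hT : IsCylTableau n lam mu d T) (hv : 0 < v) (r : ℤ) :
    (lowFreeRow (benderKnuth T v) v r).ncard = (highFreeRow T v r).ncard := by
  rw [hT.lowFreeRow_benderKnuth hv, ncard_setOf_rankIn_le (hT.finite_freeRow hv r),
    hT.ncard_freeRow hv]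
  omega

lemma ncard_highFreeRow_benderKnuth (hT : IsCylTableau n lam mu d T) (hv : 0 < v) (r : ℤ) :
    (highFreeRow (benderKnuth T v) v r).ncard = (lowFreeRow T v r).ncard := by
  rw [hT.highFreeRow_benderKnuth hv, ncard_setOf_not_rankIn_le (hT.finite_freeRow hv r),
    hT.ncard_freeRow hv]
  omega

lemma benderKnuth_benderKnuth (hT : IsCylTableau n lam mu d T) (hv : 0 < v) :
    benderKnuth (benderKnuth T v) v = T := by
  funext ⟨r, c⟩
  have hfree := hT.freeRow_benderKnuth hv r
  by_cases h : c ∈ freeRow T v r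
  · -- the free `v`s of `T` are the free cells of rank at most their number
    have hlow : rankIn (freeRow T v r) c ≤ (lowFreeRow T v r).ncard ↔ c ∈ lowFreeRow T v r :=
      rankIn_le_ncard_iff (hT.finite_freeRow hv r) Set.subset_union_left
        (fun a ha b hb hba =>
          hT.lt_of_mem_lowFreeRow_of_mem_highFreeRow hv ha (hb.resolve_left hba)) h
    rw [benderKnuth_of_mem (hfree ▸ h), hfree, hT.ncard_highFreeRow_benderKnuth hv]
    rcases h with h | h
    · rw [if_pos (hlow.2 h), h.1]
    · have hnlow : c ∉ lowFreeRow T v r := fun h' => by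
        have := h'.1
        have := h.1
        omega
      rw [if_neg (mt hlow.1 hnlow), h.1]
  · rw [benderKnuth_of_notMem (hfree ▸ h), benderKnuth_of_notMem h]

lemma lockedRow_benderKnuth (hT : IsCylTableau n lam mu d T) (hv : 0 < v) (r : ℤ) :
    lockedRow (benderKnuth T v) v r = lockedRow T v r := by
  ext c
  constructor
  · intro h
    obtain ⟨h₀, h₁⟩ := notMem_freeRow_of_mem_lockedRow h
    rw [hT.freeRow_benderKnuth hv] at h₀ h₁
    simpa only [lockedRow, Set.mem_ofPred_eq, benderKnuth_of_notMem h₀,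
      benderKnuth_of_notMem h₁] using h
  · intro h
    obtain ⟨h₀, h₁⟩ := notMem_freeRow_of_mem_lockedRow h
    simpa only [lockedRow, Set.mem_ofPred_eq, benderKnuth_of_notMem h₀,
      benderKnuth_of_notMem h₁] using h

/-- A locked `v` left of a free `v` would force a `v + 1` below the free one. -/
lemma succ_le_of_mem_freeRow_of_notMem (hT : IsCylTableau n lam mu d T) (hv : 0 < v)
    (hkn : k ≤ n) (hlam : lam ∈ PknFinset k n) (hmu : mu ∈ PknFinset k n) {a b : ℤ}
    (hb : (r, b) ∈ cylDiagram n lam mu d 0) (fa : a ∈ freeRow T v r) (fb : b ∉ freeRow T v r)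
    (hab : a ≤ b) : v + 1 ≤ T (r, b) := by
  have hTa := apply_eq_of_mem_freeRow fa
  have ha : (r, a) ∈ cylDiagram n lam mu d 0 := hT.mem_of_pos (by omega)
  have hrow := hT.row_mono ha hb hab
  by_contra! hTb
  have hbelow_b : T (r + 1, b) = v + 1 := by
    by_contra h
    exact fb (Or.inl ⟨by omega, h⟩)
  have hbelow_a := (hT.ne_of_mem_freeRow hv fa).1
  have hmem :=
    (mem_cylDiagram_of_mem_of_mem_succ hkn hlam hmu ha (hT.mem_of_pos (by omega)) hab).2
  have hrow' := hT.row_mono hmem (hT.mem_of_pos (by omega)) hab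
  have hcol := hT.col_strict (r := r) (c := a) (by omega) ((hT.1 _).1 hmem)
  omega

lemma le_of_notMem_freeRow_of_mem (hT : IsCylTableau n lam mu d T) (hv : 0 < v)
    (hkn : k ≤ n) (hlam : lam ∈ PknFinset k n) (hmu : mu ∈ PknFinset k n) {a b : ℤ}
    (ha : (r, a) ∈ cylDiagram n lam mu d 0) (fa : a ∉ freeRow T v r) (fb : b ∈ freeRow T v r)
    (hab : a ≤ b) : T (r, a) ≤ v := by
  have hTb := apply_eq_of_mem_freeRow fb
  have hb : (r, b) ∈ cylDiagram n lam mu d 0 := hT.mem_of_pos (by omega)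
  have hrow := hT.row_mono ha hb hab
  by_contra! hTa
  have habove_a : T (r - 1, a) = v := by
    by_contra h
    exact fa (Or.inr ⟨by omega, h⟩)
  have habove_b := (hT.ne_of_mem_freeRow hv fb).2
  have hb' : (r - 1 + 1, b) ∈ cylDiagram n lam mu d 0 := by rwa [sub_add_cancel]
  have hmem :=
    (mem_cylDiagram_of_mem_of_mem_succ hkn hlam hmu (hT.mem_of_pos (by omega)) hb' hab).1
  have hrow' := hT.row_mono (hT.mem_of_pos (by omega)) hmem hab
  have hcol := hT.col_strict (r := r - 1) (c := b) ((hT.1 _).1 hmem)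
  rw [sub_add_cancel] at hcol
  have := hcol (by omega)
  omega

lemma benderKnuth_row_mono (hT : IsCylTableau n lam mu d T) (hv : 0 < v) (hkn : k ≤ n)
    (hlam : lam ∈ PknFinset k n) (hmu : mu ∈ PknFinset k n) {a b : ℤ}
    (ha : (r, a) ∈ cylDiagram n lam mu d 0) (hb : (r, b) ∈ cylDiagram n lam mu d 0)
    (hab : a ≤ b) : benderKnuth T v (r, a) ≤ benderKnuth T v (r, b) := by
  by_cases fa : a ∈ freeRow T v r <;> by_cases fb : b ∈ freeRow T v r
  · have := rankIn_mono (hT.finite_freeRow hv r) hab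
    rw [benderKnuth_of_mem fa, benderKnuth_of_mem fb]
    split_ifs <;> omega
  · have := hT.succ_le_of_mem_freeRow_of_notMem hv hkn hlam hmu hb fa fb hab
    rw [benderKnuth_of_mem fa, benderKnuth_of_notMem fb]
    split_ifs <;> omega
  · have := hT.le_of_notMem_freeRow_of_mem hv hkn hlam hmu ha fa fb hab
    rw [benderKnuth_of_notMem fa, benderKnuth_of_mem fb]
    split_ifs <;> omega
  · rw [benderKnuth_of_notMem fa, benderKnuth_of_notMem fb]
    exact hT.row_mono ha hb hab

lemma benderKnuth_col_strict (hT : IsCylTableau n lam mu d T) (hv : 0 < v)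
    (h₀ : (r, c) ∈ cylDiagram n lam mu d 0) (h₁ : (r + 1, c) ∈ cylDiagram n lam mu d 0) :
    benderKnuth T v (r, c) < benderKnuth T v (r + 1, c) := by
  have hcol := hT.col_strict ((hT.1 _).1 h₀) ((hT.1 _).1 h₁)
  by_cases f₀ : c ∈ freeRow T v r <;> by_cases f₁ : c ∈ freeRow T v (r + 1)
  · exact absurd f₁ (hT.notMem_freeRow_add_one hv f₀)
  · have := hT.ne_of_mem_freeRow hv f₀
    have := apply_eq_of_mem_freeRow f₀
    rw [benderKnuth_of_mem f₀, benderKnuth_of_notMem f₁]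
    split_ifs <;> omega
  · have hne := (hT.ne_of_mem_freeRow hv f₁).2
    have := apply_eq_of_mem_freeRow f₁
    rw [add_sub_cancel_right] at hne
    rw [benderKnuth_of_notMem f₀, benderKnuth_of_mem f₁]
    split_ifs <;> omega
  · rw [benderKnuth_of_notMem f₀, benderKnuth_of_notMem f₁]
    exact hcol

lemma benderKnuth_translate_eq (hT : IsCylTableau n lam mu d T) (v : ℕ) (p : ℤ × ℤ) :
    benderKnuth T v (p.1 - k, p.2 + ((n : ℤ) - k)) = benderKnuth T v p := by
  conv_rhs => rw [← hT.translate_eq]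
  exact (benderKnuth_translate T v (-(k : ℤ), (n : ℤ) - k) p).symm

protected lemma benderKnuth (hT : IsCylTableau n lam mu d T) (hv : 0 < v) (hkn : k ≤ n)
    (hlam : lam ∈ PknFinset k n) (hmu : mu ∈ PknFinset k n) :
    IsCylTableau n lam mu d (benderKnuth T v) := by
  refine ⟨fun ⟨r, c⟩ => ?_, hT.benderKnuth_translate_eq v, fun ⟨r, c⟩ h₀ h₁ =>
    hT.benderKnuth_row_mono hv hkn hlam hmu h₀ h₁ (by simp), fun ⟨r, c⟩ h₀ h₁ =>
    hT.benderKnuth_col_strict hv h₀ h₁⟩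
  by_cases h : c ∈ freeRow T v r
  · have := apply_eq_of_mem_freeRow h
    rw [benderKnuth_of_mem h]
    exact iff_of_true (hT.mem_of_pos (by omega)) (by split_ifs <;> omega)
  · rw [benderKnuth_of_notMem h]
    exact hT.1 _

lemma periodic_ncard_lockedRow (hT : IsCylTableau n lam mu d T) (v : ℕ) :
    Function.Periodic (fun r => (lockedRow T v r).ncard) k := fun r => by
  dsimp only
  conv_lhs => rw [← hT.translate_eq]
  rw [lockedRow_translate, ncard_preimage_add_right, add_neg_cancel_right]

lemma cylWeight_benderKnuth_self (hT : IsCylTableau n lam mu d T) (hv : 0 < v) (hkn : k ≤ n)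
    (hlam : lam ∈ PknFinset k n) (hmu : mu ∈ PknFinset k n) :
    cylWeight k (benderKnuth T v) v = cylWeight k T (v + 1) := by
  have hT' := hT.benderKnuth hv hkn hlam hmu
  rw [hT'.cylWeight_eq_sum hv, hT.cylWeight_eq_sum v.succ_pos]
  calc ∑ r ∈ Icc (1 : ℤ) k, {c | benderKnuth T v (r, c) = v}.ncard
      = ∑ r ∈ Icc (1 : ℤ) k, ((lockedRow T v r).ncard + (highFreeRow T v r).ncard) := by
        refine sum_congr rfl fun r _ => ?_
        rw [ncard_setOf_apply_eq _ _ _ (hT'.finite_setOf_apply_eq hv r),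
          hT.lockedRow_benderKnuth hv, hT.ncard_lowFreeRow_benderKnuth hv]
    _ = ∑ r ∈ Icc (1 : ℤ) k, ((lockedRow T v (r - 1)).ncard + (highFreeRow T v r).ncard) := by
        rw [sum_add_distrib, sum_add_distrib,
          sum_Icc_sub_one_of_periodic (hT.periodic_ncard_lockedRow v)]
    _ = ∑ r ∈ Icc (1 : ℤ) k, {c | T (r, c) = v + 1}.ncard :=
        sum_congr rfl fun r _ =>
          (ncard_setOf_apply_eq_succ _ _ _ (hT.finite_setOf_apply_eq v.succ_pos r)).symm

lemma cylWeight_benderKnuth (hT : IsCylTableau n lam mu d T) (hv : 0 < v) (hkn : k ≤ n)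
    (hlam : lam ∈ PknFinset k n) (hmu : mu ∈ PknFinset k n) :
    cylWeight k (benderKnuth T v) = cylWeight k T ∘ Equiv.swap v (v + 1) := by
  funext w
  rw [Function.comp_apply]
  rcases eq_or_ne w v with rfl | hw
  · rw [Equiv.swap_apply_left, hT.cylWeight_benderKnuth_self hv hkn hlam hmu]
  rcases eq_or_ne w (v + 1) with rfl | hw'
  · have hT' := hT.benderKnuth hv hkn hlam hmu
    rw [Equiv.swap_apply_right, ← hT'.cylWeight_benderKnuth_self hv hkn hlam hmu,
      hT.benderKnuth_benderKnuth hv]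
  · rw [Equiv.swap_apply_of_ne_of_ne hw hw', cylWeight_benderKnuth_of_ne k T hw hw']

end IsCylTableau

def cylTableaux (n : ℕ) {k : ℕ} (lam mu : Fin k → ℕ) (d : ℕ) {l : ℕ} (β : Fin l → ℕ) :
    Set (ℤ × ℤ → ℕ) :=
  {T | IsCylTableau n lam mu d T ∧ (∀ i : Fin l, cylWeight k T ((i : ℕ) + 1) = β i) ∧
    ∀ c : ℕ, l < c → cylWeight k T c = 0}

section Swap

variable {k n : ℕ} {lam mu : Fin k → ℕ} {d l : ℕ}

lemma tabCount_eq_ncard (β : Fin l → ℕ) :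
    tabCount n lam mu d β = (cylTableaux n lam mu d β).ncard :=
  rfl

lemma benderKnuth_mem_cylTableaux (hkn : k ≤ n) (hlam : lam ∈ PknFinset k n)
    (hmu : mu ∈ PknFinset k n) {β : Fin (l + 1) → ℕ} (i : Fin l) {T : ℤ × ℤ → ℕ}
    (hT : T ∈ cylTableaux n lam mu d β) :
    benderKnuth T (i + 1) ∈ cylTableaux n lam mu d (β ∘ Equiv.swap i.castSucc i.succ) := by
  obtain ⟨hT, hβ, hzero⟩ := hT
  have hv : 0 < (i : ℕ) + 1 := Nat.succ_pos _
  have hwt := hT.cylWeight_benderKnuth hv hkn hlam hmu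
  refine ⟨hT.benderKnuth hv hkn hlam hmu, fun j => ?_, fun c hc => ?_⟩
  · have hshift : Function.Injective fun j : Fin (l + 1) => (j : ℕ) + 1 :=
      (add_left_injective 1).comp Fin.val_injective
    rw [hwt, Function.comp_apply, show (i : ℕ) + 1 + 1 = (i.succ : ℕ) + 1 by simp,
      show (i : ℕ) + 1 = (i.castSucc : ℕ) + 1 by simp, hshift.swap_apply, hβ]
    rfl
  · rw [hwt, Function.comp_apply, Equiv.swap_apply_of_ne_of_ne (by omega) (by omega), hzero c hc]

lemma tabCount_comp_swap (hkn : k ≤ n) (hlam : lam ∈ PknFinset k n) (hmu : mu ∈ PknFinset k n)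
    (β : Fin (l + 1) → ℕ) (i : Fin l) :
    tabCount n lam mu d β = tabCount n lam mu d (β ∘ Equiv.swap i.castSucc i.succ) := by
  have hv : 0 < (i : ℕ) + 1 := Nat.succ_pos _
  have hswap : (β ∘ Equiv.swap i.castSucc i.succ) ∘ Equiv.swap i.castSucc i.succ = β := by
    funext j
    simp
  rw [tabCount_eq_ncard, tabCount_eq_ncard]
  refine Set.ncard_congr (fun T _ => benderKnuth T (i + 1))
    (fun T hT => benderKnuth_mem_cylTableaux hkn hlam hmu i hT) (fun T T' hT hT' h => ?_)
    (fun T hT => ⟨benderKnuth T (i + 1), ?_, hT.1.benderKnuth_benderKnuth hv⟩)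
  · rw [← hT.1.benderKnuth_benderKnuth hv, h, hT'.1.benderKnuth_benderKnuth hv]
  · simpa only [hswap] using benderKnuth_mem_cylTableaux hkn hlam hmu i hT

end Swap

theorem quantum_Kostka_symmetric_general (k n : ℕ) (hkn : k < n)
    (lam mu : Fin k → ℕ) (hlam : lam ∈ PknFinset k n) (hmu : mu ∈ PknFinset k n)
    (d : ℕ) (l : ℕ) (beta : Fin l → ℕ) (σ : Equiv.Perm (Fin l)) :
    tabCount n lam mu d beta = tabCount n lam mu d (beta ∘ σ) := by
  obtain _ | l := l
  · rw [Subsingleton.elim σ 1]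
    rfl
  have hσ : σ ∈ Submonoid.closure (Set.range fun i : Fin l => Equiv.swap i.castSucc i.succ) := by
    rw [Equiv.Perm.mclosure_swap_castSucc_succ]
    trivial
  induction hσ using Submonoid.closure_induction generalizing beta with
  | mem τ hτ =>
    obtain ⟨i, rfl⟩ := hτ
    exact tabCount_comp_swap hkn.le hlam hmu beta i
  | one => rfl
  | mul τ₁ τ₂ _ _ h₁ h₂ =>
    rw [h₁, h₂ (beta ∘ τ₁)]
    rfl

/-- The quantum Kostka numbers `K^β_{λ/d/μ}` are invariant under any permutation of
the entries of the weight vector `β`. -/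
theorem quantum_Kostka_symmetric (k n : ℕ) (hk : 1 ≤ k) (hkn : k < n)
    (lam mu : Fin k → ℕ) (hlam : lam ∈ PknFinset k n) (hmu : mu ∈ PknFinset k n)
    (d : ℕ) (l : ℕ) (beta : Fin l → ℕ) (σ : Equiv.Perm (Fin l)) :
    tabCount n lam mu d beta = tabCount n lam mu d (beta ∘ σ) :=
  quantum_Kostka_symmetric_general k n hkn lam mu hlam hmu d l beta σ
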